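/- Correctness of the Pruning-on-the-Underside rule: if T^k_[ts,te] has tightest time interval [ts',te'] with ts' > ts, then for every start time r with ts < r ≤ ts' and every end time c with te' ≤ c ≤ te, the temporal k-core T^k_[r,c] is identical to T^k_[ts,te]. -/

import Mathlib

abbrev TEdge : Type := ℕ × ℕ × ℤ

/-- Projection of a temporal edge set over time interval [a,b]. -/
def projE (E : Finset TEdge) (a b : ℤ) : Finset TEdge :=
  E.filter (fun e => a ≤ e.2.2 ∧ e.2.2 ≤ b)

def verts (E : Finset TEdge) : Finset ℕ :=
  E.image (fun e => e.1) ∪ E.image (fun e => e.2.1)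

/-- Distinct neighbors of `v` inside vertex set `S` via edges of `E`. -/
def nbrs (E : Finset TEdge) (S : Finset ℕ) (v : ℕ) : Finset ℕ :=
  S.filter (fun u => u ≠ v ∧
    (E.filter (fun e => (e.1 = u ∧ e.2.1 = v) ∨ (e.1 = v ∧ e.2.1 = u))).Nonempty)

/-- `S` is a `k`-core candidate: every vertex of `S` has ≥ k distinct neighbors in `S`. -/
def isCoreSet (E : Finset TEdge) (k : ℕ) (S : Finset ℕ) : Prop :=
  ∀ v ∈ S, k ≤ (nbrs E S v).card

instance (E : Finset TEdge) (k : ℕ) : DecidablePred (isCoreSet E k) := fun S => by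
  unfold isCoreSet; infer_instance

/-- The `k`-core vertex set of a temporal edge set: union of all candidates. -/
def core (E : Finset TEdge) (k : ℕ) : Finset ℕ :=
  ((verts E).powerset.filter (isCoreSet E k)).sup id

/-- The edges of `E` induced among the `k`-core vertices. -/
def coreEdges (E : Finset TEdge) (k : ℕ) : Finset TEdge :=
  E.filter (fun e => e.1 ∈ core E k ∧ e.2.1 ∈ core E k)

/-- Vertices of the temporal k-core of interval [a,b]. -/
def coreV (E : Finset TEdge) (k : ℕ) (a b : ℤ) : Finset ℕ :=
  core (projE E a b) k

/-- Temporal edges of the temporal k-core of interval [a,b]. -/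
def coreE (E : Finset TEdge) (k : ℕ) (a b : ℤ) : Finset TEdge :=
  coreEdges (projE E a b) k

/-- Two intervals induce identical temporal k-cores (same vertices and temporal edges). -/
def identCore (E : Finset TEdge) (k : ℕ) (a b a' b' : ℤ) : Prop :=
  coreV E k a b = coreV E k a' b' ∧ coreE E k a b = coreE E k a' b'

/-! The `k`-core of an edge set is already the `k`-core of its own induced edges, and the
`k`-core grows with the edge set. Hence every edge set squeezed between the core edges of `A`
and `A` itself has the same `k`-core as `A`. For `ts ≤ r ≤ ts'` and `te' ≤ c ≤ te`, the
projection over `[r, c]` is squeezed in this way: it lies inside the projection over `[ts, te]`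
and contains all edges of `T^k_[ts,te]`, whose timestamps lie in `[ts', te']`. -/

section Core

variable {E E' : Finset TEdge} {k : ℕ}

lemma mem_verts {v : ℕ} : v ∈ verts E ↔ ∃ e ∈ E, e.1 = v ∨ e.2.1 = v := by
  simp only [verts, Finset.mem_union, Finset.mem_image]
  constructor
  · rintro (⟨e, he, rfl⟩ | ⟨e, he, rfl⟩)
    exacts [⟨e, he, Or.inl rfl⟩, ⟨e, he, Or.inr rfl⟩]
  · rintro ⟨e, he, rfl | rfl⟩
    exacts [Or.inl ⟨e, he, rfl⟩, Or.inr ⟨e, he, rfl⟩]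

lemma mem_nbrs {S : Finset ℕ} {u v : ℕ} :
    u ∈ nbrs E S v ↔ u ∈ S ∧ u ≠ v ∧
      ∃ e ∈ E, (e.1 = u ∧ e.2.1 = v) ∨ (e.1 = v ∧ e.2.1 = u) := by
  simp only [nbrs, Finset.mem_filter, Finset.filter_nonempty_iff]

lemma nbrs_mono_left {S S' : Finset ℕ} (hS : S ⊆ S') (v : ℕ) : nbrs E S v ⊆ nbrs E S' v :=
  Finset.filter_subset_filter _ hS

lemma mem_coreEdges {e : TEdge} :
    e ∈ coreEdges E k ↔ e ∈ E ∧ e.1 ∈ core E k ∧ e.2.1 ∈ core E k :=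
  Finset.mem_filter

lemma coreEdges_subset : coreEdges E k ⊆ E := Finset.filter_subset _ _

lemma isCoreSet_core : isCoreSet E k (core E k) := by
  intro v hv
  obtain ⟨S, hS, hvS⟩ := Finset.mem_sup.1 hv
  calc k ≤ (nbrs E S v).card := (Finset.mem_filter.1 hS).2 v hvS
    _ ≤ (nbrs E (core E k) v).card :=
        Finset.card_le_card (nbrs_mono_left (Finset.le_sup (f := id) hS) v)

lemma core_subset_verts : core E k ⊆ verts E :=
  Finset.sup_le fun _ hS => Finset.mem_powerset.1 (Finset.mem_filter.1 hS).1

lemma subset_core {S : Finset ℕ} (hcore : isCoreSet E k S) (hS : S ⊆ verts E) :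
    S ⊆ core E k :=
  Finset.le_sup (f := id) (Finset.mem_filter.2 ⟨Finset.mem_powerset.2 hS, hcore⟩)

lemma core_mono (hE : E ⊆ E') : core E k ⊆ core E' k := by
  refine subset_core (fun v hv => isCoreSet_core v hv |>.trans (Finset.card_le_card ?_)) ?_
  · intro u hu
    obtain ⟨huS, hne, e, he, hlink⟩ := mem_nbrs.1 hu
    exact mem_nbrs.2 ⟨huS, hne, e, hE he, hlink⟩
  · intro v hv
    obtain ⟨e, he, hev⟩ := mem_verts.1 (core_subset_verts hv)
    exact mem_verts.2 ⟨e, hE he, hev⟩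

lemma mem_coreEdges_of_link {e : TEdge} {u v : ℕ} (he : e ∈ E)
    (hu : u ∈ core E k) (hv : v ∈ core E k)
    (hlink : (e.1 = u ∧ e.2.1 = v) ∨ (e.1 = v ∧ e.2.1 = u)) : e ∈ coreEdges E k := by
  rcases hlink with ⟨h1, h2⟩ | ⟨h1, h2⟩
  · exact mem_coreEdges.2 ⟨he, h1 ▸ hu, h2 ▸ hv⟩
  · exact mem_coreEdges.2 ⟨he, h1 ▸ hv, h2 ▸ hu⟩

lemma isCoreSet_coreEdges_core : isCoreSet (coreEdges E k) k (core E k) := by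
  refine fun v hv => isCoreSet_core v hv |>.trans (Finset.card_le_card fun u hu => ?_)
  obtain ⟨huS, hne, e, he, hlink⟩ := mem_nbrs.1 hu
  exact mem_nbrs.2 ⟨huS, hne, e, mem_coreEdges_of_link he huS hv hlink, hlink⟩

lemma core_subset_verts_coreEdges : core E k ⊆ verts (coreEdges E k) := by
  intro v hv
  rcases Nat.eq_zero_or_pos k with rfl | hk
  · -- the `0`-core is the whole vertex set, so every edge of `E` is a core edge
    have hverts : verts E ⊆ core E 0 := subset_core (fun _ _ => Nat.zero_le _) subset_rfl
    obtain ⟨e, he, hev⟩ := mem_verts.1 (core_subset_verts hv)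
    have hcore : e ∈ coreEdges E 0 := mem_coreEdges.2 ⟨he,
      hverts (mem_verts.2 ⟨e, he, Or.inl rfl⟩), hverts (mem_verts.2 ⟨e, he, Or.inr rfl⟩)⟩
    exact mem_verts.2 ⟨e, hcore, hev⟩
  · obtain ⟨u, hu⟩ := Finset.card_pos.1 (hk.trans_le (isCoreSet_core v hv))
    obtain ⟨huS, -, e, he, hlink⟩ := mem_nbrs.1 hu
    refine mem_verts.2 ⟨e, mem_coreEdges_of_link he huS hv hlink, ?_⟩
    rcases hlink with ⟨-, h⟩ | ⟨h, -⟩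
    exacts [Or.inr h, Or.inl h]

lemma core_coreEdges : core (coreEdges E k) k = core E k :=
  (core_mono coreEdges_subset).antisymm
    (subset_core isCoreSet_coreEdges_core core_subset_verts_coreEdges)

variable {A B : Finset TEdge}

lemma core_eq_of_coreEdges_subset (hBA : B ⊆ A) (hAB : coreEdges A k ⊆ B) :
    core B k = core A k :=
  (core_mono hBA).antisymm (core_coreEdges.symm.subset.trans (core_mono hAB))

lemma coreEdges_eq_of_coreEdges_subset (hBA : B ⊆ A) (hAB : coreEdges A k ⊆ B) :
    coreEdges B k = coreEdges A k := by
  ext e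
  rw [mem_coreEdges, mem_coreEdges, core_eq_of_coreEdges_subset hBA hAB]
  exact ⟨fun ⟨he, hends⟩ => ⟨hBA he, hends⟩,
    fun ⟨he, hends⟩ => ⟨hAB (mem_coreEdges.2 ⟨he, hends⟩), hends⟩⟩

end Core

lemma mem_projE {E : Finset TEdge} {a b : ℤ} {e : TEdge} :
    e ∈ projE E a b ↔ e ∈ E ∧ a ≤ e.2.2 ∧ e.2.2 ≤ b :=
  Finset.mem_filter

lemma projE_mono {E : Finset TEdge} {a b a' b' : ℤ} (ha : a ≤ a') (hb : b' ≤ b) :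
    projE E a' b' ⊆ projE E a b := fun _ he =>
  have ⟨he, ha', hb'⟩ := mem_projE.1 he
  mem_projE.2 ⟨he, ha.trans ha', hb'.trans hb⟩

theorem stmt_9_general (E : Finset TEdge) (k : ℕ) (ts te ts' te' : ℤ)
    (hmin : IsLeast {t : ℤ | ∃ e ∈ coreE E k ts te, e.2.2 = t} ts')
    (hmax : IsGreatest {t : ℤ | ∃ e ∈ coreE E k ts te, e.2.2 = t} te') :
    ∀ r c : ℤ, ts < r → r ≤ ts' → te' ≤ c → c ≤ te →
      identCore E k r c ts te := by
  intro r c hr hr' hc hc'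
  have hBA : projE E r c ⊆ projE E ts te := projE_mono hr.le hc'
  have hAB : coreE E k ts te ⊆ projE E r c := fun e he =>
    mem_projE.2 ⟨(mem_projE.1 (coreEdges_subset he)).1,
      hr'.trans (hmin.2 ⟨e, he, rfl⟩), (hmax.2 ⟨e, he, rfl⟩).trans hc⟩
  exact ⟨core_eq_of_coreEdges_subset hBA hAB, coreEdges_eq_of_coreEdges_subset hBA hAB⟩

/-- correctness of Pruning-on-the-Underside: if the TTI [ts',te'] of
the nonempty core T^k_[ts,te] satisfies ts' > ts, then for every r with
ts < r ≤ ts' and every c with te' ≤ c ≤ te, T^k_[r,c] is identical to T^k_[ts,te]. -/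
theorem stmt_9 (E : Finset TEdge) (k : ℕ) (ts te ts' te' : ℤ)
    (h : (coreE E k ts te).Nonempty)
    (hmin : IsLeast {t : ℤ | ∃ e ∈ coreE E k ts te, e.2.2 = t} ts')
    (hmax : IsGreatest {t : ℤ | ∃ e ∈ coreE E k ts te, e.2.2 = t} te')
    (hgt : ts < ts') :
    ∀ r c : ℤ, ts < r → r ≤ ts' → te' ≤ c → c ≤ te →
      identCore E k r c ts te :=
  stmt_9_general E k ts te ts' te' hmin hmax
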